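/- arXiv:1410.6033 — 2 statements merged into one kernel-verified Lean document; each statement's English description precedes it below -/
import Mathlib

section
/- Let G : ℝ^k → ℝ be twice continuously differentiable on a neighborhood of 0. Then u^{k+2} ( ∫_{‖x‖<1/u} G(x) dx − Vol(B_k) G(0) u^{−k} ) → Vol(B_k) · tr(Hess G(0)) / (2(k+2)) as u → ∞. -/
open MeasureTheory Filter

/-- The volume of the unit ball in `ℝ^k`. -/
noncomputable def unitBallVol (k : ℕ) : ℝ :=
  (volume (Metric.ball (0 : EuclideanSpace ℝ (Fin k)) 1)).toReal

/-!
Write `G = G 0 + D x + B x x / 2 + R x` with `D`, `B` the first and second derivatives at `0` and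
`R x = o(‖x‖²)`. Over the ball of radius `r`, the linear term integrates to `0` because it is odd,
the remainder contributes `o(r² · vol (ball 0 r)) = o(r^(k+2))`, and by the symmetries of the ball
`∫ xᵢ xⱼ = 0` for `i ≠ j` while all `∫ xᵢ²` are equal; summing them gives `∫ ‖x‖²`, which polar
coordinates evaluate to `k · vol (ball 0 1) · r^(k+2) / (k+2)`.
-/

open Metric Asymptotics Topology Set

section Taylor

variable {E F : Type*} [NormedAddCommGroup E] [NormedSpace ℝ E]
  [NormedAddCommGroup F] [NormedSpace ℝ F] {f : E → F}

/-- The remainder vanishes at `0` and, the Hessian being symmetric, has derivative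
`f' y - f' 0 - B y = o(‖y‖)`; the mean value inequality turns this into `o(‖x‖²)`. -/
theorem ContDiffAt.isLittleO_taylor_two (hf : ContDiffAt ℝ 2 f 0) :
    (fun x => f x - f 0 - fderiv ℝ f 0 x - (2 : ℝ)⁻¹ • fderiv ℝ (fderiv ℝ f) 0 x x)
      =o[𝓝 0] fun x => ‖x‖ ^ 2 := by
  set B := fderiv ℝ (fderiv ℝ f) 0
  have hsymm : ∀ v w, B v w = B w v := hf.isSymmSndFDerivAt (by simp)
  obtain ⟨ε, hε, hdiff⟩ : ∃ ε > 0, ∀ y ∈ ball (0 : E) ε, DifferentiableAt ℝ f y :=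
    eventually_nhds_iff_ball.1 <|
      (hf.eventually (by simp)).mono fun y hy => hy.differentiableAt (by simp)
  have hB : HasFDerivAt (fderiv ℝ f) B 0 :=
    ((hf.fderiv_right (m := 1) (by norm_num)).differentiableAt (by simp)).hasFDerivAt
  have hderiv : ∀ y ∈ ball (0 : E) ε, HasFDerivWithinAt
      (fun x => f x - fderiv ℝ f 0 x - (2 : ℝ)⁻¹ • B x x)
      (fderiv ℝ f y - fderiv ℝ f 0 - B y) (ball 0 ε) y := by
    intro y hy
    have hquad := B.hasFDerivAt_of_bilinear (hasFDerivAt_id y) (hasFDerivAt_id y)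
    convert (((hdiff y hy).hasFDerivAt.sub (fderiv ℝ f 0).hasFDerivAt).sub
      (hquad.const_smul (2 : ℝ)⁻¹)).hasFDerivWithinAt using 1
    · rfl
    · ext v
      simp only [sub_apply, id_eq, ContinuousLinearMap.precompR_apply,
        ContinuousLinearMap.compL_apply, ContinuousLinearMap.comp_id, smul_add, add_apply,
        smul_apply, ContinuousLinearMap.precompL_apply, ContinuousLinearMap.id_apply, hsymm v y,
        sub_right_inj]
      module
  have hball : 𝓝[ball (0 : E) ε] 0 = 𝓝 0 := nhdsWithin_eq_nhds.2 (ball_mem_nhds 0 hε)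
  have hsmall : (fun y => fderiv ℝ f y - fderiv ℝ f 0 - B y) =o[𝓝[ball 0 ε] 0]
      fun y => ‖y - 0‖ ^ 1 := by
    rw [hball]
    simpa using (hasFDerivAt_iff_isLittleO_nhds_zero.1 hB).norm_right
  have h := (convex_ball (0 : E) ε).isLittleO_pow_succ (mem_ball_self hε) hderiv hsmall
  rw [hball] at h
  convert h using 2 with x
  · simp only [map_zero, smul_zero, sub_zero]
    abel
  · simp

end Taylor

theorem ContinuousOn.integrableOn_ball {E F : Type*} [MetricSpace E] [ProperSpace E]
    [MeasurableSpace E] [OpensMeasurableSpace E] [NormedAddCommGroup F] {μ : Measure E}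
    [IsFiniteMeasureOnCompacts μ] {f : E → F} {x : E} {r : ℝ}
    (hf : ContinuousOn f (closedBall x r)) : IntegrableOn f (ball x r) μ :=
  (hf.integrableOn_compact (isCompact_closedBall x r)).mono_set ball_subset_closedBall

theorem Asymptotics.IsLittleO.setIntegral_ball {E F : Type*} [NormedAddCommGroup E]
    [ProperSpace E] [MeasurableSpace E] [OpensMeasurableSpace E] [NormedAddCommGroup F]
    [NormedSpace ℝ F] {μ : Measure E} [IsFiniteMeasureOnCompacts μ] {f : E → F} {p : ℕ}
    (hf : f =o[𝓝 0] fun x => ‖x‖ ^ p) :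
    (fun r => ∫ x in ball (0 : E) r, f x ∂μ) =o[𝓝[>] 0] fun r => r ^ p * μ.real (ball 0 r) := by
  rw [isLittleO_iff]
  intro c hc
  obtain ⟨δ, hδ, hsmall⟩ := eventually_nhds_iff_ball.1 (isLittleO_iff.1 hf hc)
  filter_upwards [Ioo_mem_nhdsGT hδ] with r ⟨hr, hrδ⟩
  have hbound : ∀ x ∈ ball (0 : E) r, ‖f x‖ ≤ c * r ^ p := by
    intro x hx
    refine (hsmall x (ball_subset_ball hrδ.le hx)).trans ?_
    rw [norm_pow, _root_.norm_norm]
    gcongr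
    exact (mem_ball_zero_iff.1 hx).le
  calc ‖∫ x in ball (0 : E) r, f x ∂μ‖ ≤ c * r ^ p * μ.real (ball 0 r) :=
        norm_setIntegral_le_of_norm_le_const measure_ball_lt_top hbound
    _ = c * ‖r ^ p * μ.real (ball 0 r)‖ := by
        rw [Real.norm_of_nonneg (by positivity), mul_assoc]

section Polar

variable {E : Type*} [NormedAddCommGroup E] [NormedSpace ℝ E] [FiniteDimensional ℝ E]
  [MeasurableSpace E] [BorelSpace E] (μ : Measure E) [μ.IsAddHaarMeasure]

theorem Measure.addHaar_real_ball_of_pos {r : ℝ} (hr : 0 < r) :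
    μ.real (ball (0 : E) r) = r ^ Module.finrank ℝ E * μ.real (ball 0 1) := by
  rw [measureReal_def, Measure.addHaar_ball_of_pos _ _ hr, ENNReal.toReal_mul,
    ENNReal.toReal_ofReal (by positivity), measureReal_def]

theorem setIntegral_ball_norm_sq [Nontrivial E] {r : ℝ} (hr : 0 ≤ r) :
    ∫ x in ball (0 : E) r, ‖x‖ ^ 2 ∂μ = Module.finrank ℝ E * μ.real (ball 0 1) *
      (r ^ (Module.finrank ℝ E + 2) / (Module.finrank ℝ E + 2)) := by
  set d := Module.finrank ℝ E
  have hd : 0 < d := Module.finrank_pos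
  have hpolar := integral_fun_norm_addHaar μ ((Iio r).indicator fun y => y ^ 2)
  have hball : ball (0 : E) r = (‖·‖) ⁻¹' Iio r := by ext; simp
  have hcomp : ((‖·‖) ⁻¹' Iio r).indicator (fun x : E => ‖x‖ ^ 2)
      = fun x => (Iio r).indicator (fun y => y ^ 2) ‖x‖ :=
    funext fun _ => indicator_comp_right _
  have hradial : ∀ y : ℝ, y ^ (d - 1) • (Iio r).indicator (fun y => y ^ 2) y
      = (Iio r).indicator (fun y => y ^ (d + 1)) y := by
    intro y
    by_cases hy : y ∈ Iio r
    · simp only [indicator_of_mem hy, smul_eq_mul, ← pow_add]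
      congr 1
      omega
    · simp [indicator_of_notMem hy]
  rw [hball, ← integral_indicator (measurableSet_Iio.preimage continuous_norm.measurable), hcomp,
    hpolar, funext hradial, integral_indicator measurableSet_Iio,
    Measure.restrict_restrict measurableSet_Iio, Iio_inter_Ioi, ← integral_Ioc_eq_integral_Ioo,
    ← intervalIntegral.integral_of_le hr, integral_pow, nsmul_eq_mul, smul_eq_mul]
  push_cast
  ring

end Polar

section Symmetry

variable {E F : Type*} [NormedAddCommGroup E] [InnerProductSpace ℝ E] [FiniteDimensional ℝ E]
  [MeasurableSpace E] [BorelSpace E] [NormedAddCommGroup F] [NormedSpace ℝ F]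

theorem setIntegral_ball_comp_linearIsometryEquiv (e : E ≃ₗᵢ[ℝ] E) (f : E → F) (r : ℝ) :
    ∫ x in ball (0 : E) r, f (e x) = ∫ x in ball 0 r, f x := by
  have himage : e '' ball 0 r = ball 0 r := by simp
  conv_rhs => rw [← himage,
    e.measurePreserving.setIntegral_image_emb e.toHomeomorph.measurableEmbedding f]

theorem setIntegral_ball_eq_zero_of_comp_eq_neg (e : E ≃ₗᵢ[ℝ] E) {f : E → F}
    (hf : ∀ x, f (e x) = -f x) (r : ℝ) : ∫ x in ball (0 : E) r, f x = 0 := by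
  have h := setIntegral_ball_comp_linearIsometryEquiv e f r
  simp only [hf, integral_neg] at h
  have h2 : (2 : ℝ) • ∫ x in ball (0 : E) r, f x = 0 := by
    rw [two_smul]
    nth_rewrite 1 [← h]
    exact neg_add_cancel _
  exact (smul_eq_zero.1 h2).resolve_left two_ne_zero

end Symmetry

section Coordinates

variable {ι : Type*} [Fintype ι]

theorem setIntegral_ball_coord_mul_coord {i j : ι} (hij : i ≠ j) (r : ℝ) :
    ∫ x in ball (0 : EuclideanSpace ℝ ι) r, x i * x j = 0 := by
  classical
  let reflect : EuclideanSpace ℝ ι ≃ₗᵢ[ℝ] EuclideanSpace ℝ ι :=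
    LinearIsometryEquiv.piLpCongrRight 2 fun t =>
      if t = i then LinearIsometryEquiv.neg ℝ else LinearIsometryEquiv.refl ℝ ℝ
  refine setIntegral_ball_eq_zero_of_comp_eq_neg reflect (fun x => ?_) r
  simp [reflect, LinearIsometryEquiv.piLpCongrRight_apply, hij.symm]

theorem setIntegral_ball_coord_sq_eq (i j : ι) (r : ℝ) :
    ∫ x in ball (0 : EuclideanSpace ℝ ι) r, x i ^ 2 =
      ∫ x in ball (0 : EuclideanSpace ℝ ι) r, x j ^ 2 := by
  classical
  rw [← setIntegral_ball_comp_linearIsometryEquiv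
    (LinearIsometryEquiv.piLpCongrLeft 2 ℝ ℝ (Equiv.swap i j)) (fun x => x j ^ 2) r]
  congr! 3 with x
  simp [LinearIsometryEquiv.piLpCongrLeft_apply, Equiv.piCongrLeft'_apply]

theorem setIntegral_ball_coord_sq {r : ℝ} (hr : 0 ≤ r) (i : ι) :
    ∫ x in ball (0 : EuclideanSpace ℝ ι) r, x i ^ 2 =
      volume.real (ball (0 : EuclideanSpace ℝ ι) 1) *
        (r ^ (Fintype.card ι + 2) / (Fintype.card ι + 2)) := by
  have : Nonempty ι := ⟨i⟩
  have hsum : ∑ j : ι, ∫ x in ball (0 : EuclideanSpace ℝ ι) r, x j ^ 2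
      = ∫ x in ball (0 : EuclideanSpace ℝ ι) r, ‖x‖ ^ 2 := by
    rw [← integral_finsetSum _ fun j _ => ContinuousOn.integrableOn_ball (by fun_prop)]
    simp only [EuclideanSpace.norm_sq_eq, Real.norm_eq_abs, sq_abs]
  rw [Finset.sum_congr rfl fun j _ => setIntegral_ball_coord_sq_eq j i r, Finset.sum_const,
    Finset.card_univ, nsmul_eq_mul, setIntegral_ball_norm_sq volume hr,
    finrank_euclideanSpace, mul_assoc] at hsum
  exact mul_left_cancel₀ (by simp) hsum

variable [DecidableEq ι]

theorem setIntegral_ball_bilinear_diag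
    (B : EuclideanSpace ℝ ι →L[ℝ] EuclideanSpace ℝ ι →L[ℝ] ℝ) {r : ℝ} (hr : 0 ≤ r) :
    ∫ x in ball (0 : EuclideanSpace ℝ ι) r, B x x =
      volume.real (ball (0 : EuclideanSpace ℝ ι) 1) *
        (r ^ (Fintype.card ι + 2) / (Fintype.card ι + 2)) *
        ∑ i, B (EuclideanSpace.single i 1) (EuclideanSpace.single i 1) := by
  set e : ι → EuclideanSpace ℝ ι := fun i => EuclideanSpace.single i 1
  have hexpand : ∀ x : EuclideanSpace ℝ ι, B x x = ∑ i, ∑ j, x i * x j * B (e i) (e j) := by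
    intro x
    conv_lhs => rw [← (EuclideanSpace.basisFun ι ℝ).sum_repr x]
    simp only [e, EuclideanSpace.basisFun_repr, EuclideanSpace.basisFun_apply, map_sum, map_smul,
      sum_apply, smul_apply, smul_eq_mul, Finset.mul_sum,
      mul_assoc]
    rw [Finset.sum_comm]
    exact Finset.sum_congr rfl fun _ _ => Finset.sum_congr rfl fun _ _ => mul_left_comm _ _ _
  have hint : ∀ i j, IntegrableOn (fun x : EuclideanSpace ℝ ι => x i * x j * B (e i) (e j))
      (ball 0 r) := fun i j => ContinuousOn.integrableOn_ball (by fun_prop)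
  rw [setIntegral_congr_fun measurableSet_ball fun x _ => hexpand x,
    integral_finsetSum _ fun i _ => integrable_finsetSum _ fun j _ => hint i j, Finset.mul_sum]
  refine Finset.sum_congr rfl fun i _ => ?_
  rw [integral_finsetSum _ fun j _ => hint i j, Finset.sum_eq_single i]
  · simp only [integral_mul_const, ← sq, setIntegral_ball_coord_sq hr, e]
  · intro j _ hji
    rw [integral_mul_const, setIntegral_ball_coord_mul_coord hji.symm, zero_mul]
  · simp

theorem ContDiffAt.isLittleO_setIntegral_ball_sub {G : EuclideanSpace ℝ ι → ℝ}
    (hG : ContDiffAt ℝ 2 G 0) :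
    (fun r => (∫ x in ball (0 : EuclideanSpace ℝ ι) r, G x)
      - volume.real (ball (0 : EuclideanSpace ℝ ι) 1) * G 0 * r ^ Fintype.card ι
      - volume.real (ball (0 : EuclideanSpace ℝ ι) 1) *
          (∑ i, fderiv ℝ (fderiv ℝ G) 0 (EuclideanSpace.single i 1) (EuclideanSpace.single i 1))
          / (2 * (Fintype.card ι + 2)) * r ^ (Fintype.card ι + 2))
      =o[𝓝[>] 0] fun r => r ^ (Fintype.card ι + 2) := by
  set D := fderiv ℝ G 0
  set B := fderiv ℝ (fderiv ℝ G) 0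
  have hscale : (fun r : ℝ => r ^ 2 * volume.real (ball (0 : EuclideanSpace ℝ ι) r))
      =O[𝓝[>] 0] fun r => r ^ (Fintype.card ι + 2) := by
    refine (isBigO_const_mul_self (volume.real (ball (0 : EuclideanSpace ℝ ι) 1)) _ _).congr'
      ?_ EventuallyEq.rfl
    filter_upwards [self_mem_nhdsWithin] with r hr
    rw [Measure.addHaar_real_ball_of_pos _ hr, finrank_euclideanSpace]
    ring
  obtain ⟨u, hu, hGu⟩ := hG.contDiffOn le_rfl (by simp)
  have hcont : ∀ᶠ r in 𝓝[>] (0 : ℝ), ContinuousOn G (closedBall 0 r) :=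
    nhdsWithin_le_nhds <|
      (eventually_closedBall_subset hu).mono fun r hr => hGu.continuousOn.mono hr
  refine ((hG.isLittleO_taylor_two.setIntegral_ball).trans_isBigO hscale).congr' ?_
    EventuallyEq.rfl
  filter_upwards [self_mem_nhdsWithin, hcont] with r hr hGr
  have hD : ∫ x in ball (0 : EuclideanSpace ℝ ι) r, D x = 0 :=
    setIntegral_ball_eq_zero_of_comp_eq_neg (LinearIsometryEquiv.neg ℝ) (fun x => map_neg D x) r
  have hsplit : ∫ x in ball (0 : EuclideanSpace ℝ ι) r, (G x - G 0 - D x - (2 : ℝ)⁻¹ • B x x)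
      = (∫ x in ball (0 : EuclideanSpace ℝ ι) r, G x)
        - (∫ x in ball (0 : EuclideanSpace ℝ ι) r, G 0)
        - (∫ x in ball (0 : EuclideanSpace ℝ ι) r, D x)
        - ∫ x in ball (0 : EuclideanSpace ℝ ι) r, (2 : ℝ)⁻¹ • B x x := by
    rw [integral_sub, integral_sub, integral_sub] <;>
      exact ContinuousOn.integrableOn_ball (by fun_prop)
  rw [hsplit, setIntegral_const, hD, integral_smul, setIntegral_ball_bilinear_diag B hr.le,
    Measure.addHaar_real_ball_of_pos _ hr, finrank_euclideanSpace, smul_eq_mul, smul_eq_mul]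
  field_simp
  ring

end Coordinates

theorem stmt2_general (k : ℕ) (G : EuclideanSpace ℝ (Fin k) → ℝ)
    (hG : ∃ s ∈ nhds (0 : EuclideanSpace ℝ (Fin k)), ContDiffOn ℝ 2 G s) :
    Tendsto (fun u : ℝ => u ^ (k + 2) *
        ((∫ x in Metric.ball (0 : EuclideanSpace ℝ (Fin k)) (1 / u), G x)
          - unitBallVol k * G 0 / u ^ k))
      atTop
      (nhds (unitBallVol k *
        (∑ i : Fin k, iteratedFDeriv ℝ 2 G 0
            ![EuclideanSpace.single i 1, EuclideanSpace.single i 1]) / (2 * (k + 2)))) := by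
  obtain ⟨s, hs, hGs⟩ := hG
  have hV : volume.real (ball (0 : EuclideanSpace ℝ (Fin k)) 1) = unitBallVol k := rfl
  have hexp := ((hGs.contDiffAt hs).isLittleO_setIntegral_ball_sub.tendsto_div_nhds_zero).comp
    tendsto_inv_atTop_nhdsGT_zero
  simp only [Fintype.card_fin, hV] at hexp
  simp only [iteratedFDeriv_two_apply]
  have hlim := hexp.const_add (unitBallVol k *
    (∑ i : Fin k, fderiv ℝ (fderiv ℝ G) 0 (EuclideanSpace.single i 1) (EuclideanSpace.single i 1))
      / (2 * (k + 2)))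
  rw [add_zero] at hlim
  refine hlim.congr' ?_
  filter_upwards [eventually_gt_atTop 0] with u hu
  simp only [Function.comp_apply, one_div, inv_pow]
  field_simp
  ring

theorem stmt2 (k : ℕ) (hk : 1 ≤ k) (G : EuclideanSpace ℝ (Fin k) → ℝ)
    (hG : ∃ s ∈ nhds (0 : EuclideanSpace ℝ (Fin k)), ContDiffOn ℝ 2 G s) :
    Tendsto (fun u : ℝ => u ^ (k + 2) *
        ((∫ x in Metric.ball (0 : EuclideanSpace ℝ (Fin k)) (1 / u), G x)
          - unitBallVol k * G 0 / u ^ k))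
      atTop
      (nhds (unitBallVol k *
        (∑ i : Fin k, iteratedFDeriv ℝ 2 G 0
            ![EuclideanSpace.single i 1, EuclideanSpace.single i 1]) / (2 * (k + 2)))) :=
  stmt2_general k G hG
end

section
/- Let F_{m,k} denote the tail of the F-distribution with m ≥ 1 and k ≥ 2 degrees of freedom. Then F_{m,k}(u) = (2 (k/m)^{k/2}) / (k B(m/2, k/2)) · [ u^{−k/2} − (k²(k+m))/(2m(k+2)) · u^{−(k/2+1)} ] + o(u^{−(k/2+1)}) as u → ∞. In particular, u^{k/2} F_{m,k}(u) → 2 (k/m)^{k/2}/(k B(m/2, k/2)). -/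
open MeasureTheory Filter

/-- Tail of the F-distribution with `m` and `k` degrees of freedom. -/
noncomputable def fTail (m k : ℕ) (u : ℝ) : ℝ :=
  ∫ x in Set.Ioi u,
    Real.Gamma (((m : ℝ) + k) / 2) / (Real.Gamma ((m : ℝ) / 2) * Real.Gamma ((k : ℝ) / 2)) *
      ((m : ℝ) / k) ^ ((m : ℝ) / 2) * x ^ ((m : ℝ) / 2 - 1) *
      (1 + (m : ℝ) / k * x) ^ (-(((m : ℝ) + k) / 2))

/-- The Beta function, via Gamma functions. -/
noncomputable def betaFn (a b : ℝ) : ℝ := Real.Gamma a * Real.Gamma b / Real.Gamma (a + b)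

/-!
With `c = m / k`, `p = (m + k) / 2`, `s = k / 2` and `κ = (k / m) ^ (k / 2) / B(m / 2, k / 2)`,
the density is `κ · c ^ p x ^ (p - s - 1) (1 + c x) ^ (-p)`. Factoring out `c x` turns this into
`κ x ^ (-(s + 1)) (1 + t) ^ (-p)` with `t = 1 / (c x)`, and the elementary bounds
`1 - p t ≤ (1 + t) ^ (-p) ≤ 1 - p t + p (p + 1) / 2 · t ^ 2` for `t ≥ 0` squeeze the tail integral
between two explicit combinations of powers of `u` that differ by `O(u ^ (-(s + 2)))`.
Both limits follow from this two-term expansion.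
-/

open Real Set Asymptotics

lemma one_sub_mul_le_one_add_rpow_neg {p t : ℝ} (hp : 0 ≤ p) (ht : -1 < t) :
    1 - p * t ≤ (1 + t) ^ (-p) := by
  have h : 0 < 1 + t := by linarith
  have hlog : p * log (1 + t) ≤ p * t :=
    mul_le_mul_of_nonneg_left (by linarith [log_le_sub_one_of_pos h]) hp
  rw [rpow_def_of_pos h]
  linarith [add_one_le_exp (log (1 + t) * -p)]

lemma one_add_rpow_neg_le {p t : ℝ} (hp : 0 ≤ p) (ht : 0 ≤ t) :
    (1 + t) ^ (-p) ≤ 1 - p * t + p * (p + 1) / 2 * t ^ 2 := by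
  set g : ℝ → ℝ := fun x => 1 - p * x + p * (p + 1) / 2 * x ^ 2 - (1 + x) ^ (-p)
  have hg : ∀ x, 0 < 1 + x →
      HasDerivAt g (p * ((1 + x) ^ (-(p + 1)) - (1 - (p + 1) * x))) x := by
    intro x hx
    refine (((((hasDerivAt_id x).const_mul p).const_sub 1).add
      ((hasDerivAt_pow 2 x).const_mul (p * (p + 1) / 2))).sub
      (((hasDerivAt_id x).const_add 1).rpow_const (p := -p) (Or.inl hx.ne'))).congr_deriv ?_
    rw [show -(p + 1) = -p - 1 by ring]
    simp only [id, Nat.cast_ofNat]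
    ring
  have hmono : MonotoneOn g (Ici 0) := by
    refine monotoneOn_of_hasDerivWithinAt_nonneg (convex_Ici 0)
      (fun x hx => (hg x ?_).continuousAt.continuousWithinAt)
      (fun x hx => (hg x ?_).hasDerivWithinAt) fun x hx => ?_
    all_goals simp only [interior_Ici, mem_Ioi, mem_Ici] at hx
    · linarith
    · linarith
    · exact mul_nonneg hp
        (sub_nonneg.2 (one_sub_mul_le_one_add_rpow_neg (by linarith) (by linarith)))
  have hg₀ : g 0 = 0 := by simp [g]
  exact sub_nonneg.1 (hg₀ ▸ hmono self_mem_Ici ht ht)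

lemma rpow_mul_one_add_mul_rpow_neg_eq {c p s x : ℝ} (hc : 0 < c) (hx : 0 < x) :
    c ^ p * x ^ (p - s - 1) * (1 + c * x) ^ (-p) = x ^ (-(s + 1)) * (1 + (c * x)⁻¹) ^ (-p) := by
  have hcx : 0 < c * x := mul_pos hc hx
  rw [show 1 + c * x = c * x * (1 + (c * x)⁻¹) by field_simp; ring, mul_rpow hcx.le (by positivity),
    mul_rpow hc.le hx.le, rpow_neg hc.le, sub_sub, sub_eq_add_neg, rpow_add hx]
  field_simp [(rpow_pos_of_pos hc p).ne']
  rw [← rpow_add hx, add_neg_cancel, rpow_zero]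

lemma rpow_mul_one_add_mul_rpow_neg_bounds {c p s x : ℝ} (hc : 0 < c) (hp : 0 ≤ p) (hx : 0 < x) :
    x ^ (-(s + 1)) - p / c * x ^ (-(s + 2)) ≤ c ^ p * x ^ (p - s - 1) * (1 + c * x) ^ (-p) ∧
      c ^ p * x ^ (p - s - 1) * (1 + c * x) ^ (-p) ≤
        x ^ (-(s + 1)) - p / c * x ^ (-(s + 2)) + p * (p + 1) / (2 * c ^ 2) * x ^ (-(s + 3)) := by
  have h1 : x ^ (-(s + 2)) = x ^ (-(s + 1)) * (c * x)⁻¹ * c := by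
    rw [show -(s + 2) = -(s + 1) + -1 by ring, rpow_add hx, rpow_neg_one]
    field_simp
  have h2 : x ^ (-(s + 3)) = x ^ (-(s + 1)) * ((c * x)⁻¹) ^ 2 * c ^ 2 := by
    rw [show -(s + 3) = -(s + 2) + -1 by ring, rpow_add hx, h1, rpow_neg_one]
    field_simp
  rw [rpow_mul_one_add_mul_rpow_neg_eq hc hx, h1, h2]
  have hx' : 0 ≤ x ^ (-(s + 1)) := by positivity
  have ht : 0 ≤ (c * x)⁻¹ := by positivity
  have hlo := mul_le_mul_of_nonneg_left
    (one_sub_mul_le_one_add_rpow_neg hp (t := (c * x)⁻¹) (by linarith)) hx'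
  have hhi := mul_le_mul_of_nonneg_left (one_add_rpow_neg_le hp ht) hx'
  refine ⟨le_trans (le_of_eq ?_) hlo, le_trans hhi (le_of_eq ?_)⟩
  · field_simp
  · field_simp

lemma integral_Ioi_rpow_neg_add_one {r u : ℝ} (hr : 0 < r) (hu : 0 < u) :
    ∫ x in Ioi u, x ^ (-(r + 1)) = u ^ (-r) / r := by
  rw [integral_Ioi_rpow_of_lt (by linarith) hu, show -(r + 1) + 1 = -r by ring, neg_div_neg_eq]

lemma integral_Ioi_rpow_mul_one_add_mul_rpow_neg_bounds {c p s u : ℝ} (hc : 0 < c) (hp : 0 ≤ p)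
    (hs : 0 < s) (hu : 0 < u) :
    u ^ (-s) / s - p / c * (u ^ (-(s + 1)) / (s + 1)) ≤
        ∫ x in Ioi u, c ^ p * x ^ (p - s - 1) * (1 + c * x) ^ (-p) ∧
      ∫ x in Ioi u, c ^ p * x ^ (p - s - 1) * (1 + c * x) ^ (-p) ≤
        u ^ (-s) / s - p / c * (u ^ (-(s + 1)) / (s + 1)) +
          p * (p + 1) / (2 * c ^ 2) / (s + 2) * u ^ (-(s + 2)) := by
  have hint : ∀ r : ℝ, 0 < r → IntegrableOn (fun x : ℝ => x ^ (-(r + 1))) (Ioi u) :=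
    fun r hr => integrableOn_Ioi_rpow_of_lt (by linarith) hu
  have hI₁ := hint s hs
  have hI₂ := hint (s + 1) (by linarith)
  have hI₃ := hint (s + 2) (by linarith)
  have hJ₂ := integral_Ioi_rpow_neg_add_one (r := s + 1) (by linarith) hu
  have hJ₃ := integral_Ioi_rpow_neg_add_one (r := s + 2) (by linarith) hu
  rw [show s + 1 + 1 = s + 2 by ring] at hI₂ hJ₂
  rw [show s + 2 + 1 = s + 3 by ring] at hI₃ hJ₃
  have hL : IntegrableOn (fun x => x ^ (-(s + 1)) - p / c * x ^ (-(s + 2))) (Ioi u) :=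
    hI₁.sub (hI₂.const_mul _)
  have hU : IntegrableOn (fun x => x ^ (-(s + 1)) - p / c * x ^ (-(s + 2)) +
      p * (p + 1) / (2 * c ^ 2) * x ^ (-(s + 3))) (Ioi u) :=
    hL.add (hI₃.const_mul _)
  have hbounds := fun x (hx : x ∈ Ioi u) =>
    rpow_mul_one_add_mul_rpow_neg_bounds (s := s) hc hp (hu.trans hx)
  have hf : IntegrableOn (fun x => c ^ p * x ^ (p - s - 1) * (1 + c * x) ^ (-p)) (Ioi u) :=
    integrable_of_le_of_le (by fun_prop : Measurable _).aestronglyMeasurable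
      (ae_restrict_of_forall_mem measurableSet_Ioi fun x hx => (hbounds x hx).1)
      (ae_restrict_of_forall_mem measurableSet_Ioi fun x hx => (hbounds x hx).2) hL hU
  have hLint : ∫ x in Ioi u, (x ^ (-(s + 1)) - p / c * x ^ (-(s + 2))) =
      u ^ (-s) / s - p / c * (u ^ (-(s + 1)) / (s + 1)) := by
    rw [integral_sub hI₁ (hI₂.const_mul _), integral_const_mul, integral_Ioi_rpow_neg_add_one hs hu,
      hJ₂]
  have hUint : ∫ x in Ioi u, (x ^ (-(s + 1)) - p / c * x ^ (-(s + 2)) +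
      p * (p + 1) / (2 * c ^ 2) * x ^ (-(s + 3))) =
      u ^ (-s) / s - p / c * (u ^ (-(s + 1)) / (s + 1)) +
        p * (p + 1) / (2 * c ^ 2) / (s + 2) * u ^ (-(s + 2)) := by
    rw [integral_add hL (hI₃.const_mul _), hLint, integral_const_mul, hJ₃]
    ring
  exact ⟨hLint ▸ setIntegral_mono_on hL hf measurableSet_Ioi fun x hx => (hbounds x hx).1,
    hUint ▸ setIntegral_mono_on hf hU measurableSet_Ioi fun x hx => (hbounds x hx).2⟩

lemma tendsto_of_isBigO_sub_two_term {F : ℝ → ℝ} {A B s : ℝ}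
    (h : (fun u => F u - A * (u ^ (-s) - B * u ^ (-(s + 1)))) =O[atTop] fun u => u ^ (-(s + 2))) :
    Tendsto (fun u => (F u - A * (u ^ (-s) - B * u ^ (-(s + 1)))) / u ^ (-(s + 1))) atTop
        (nhds 0) ∧
      Tendsto (fun u => u ^ s * F u) atTop (nhds A) := by
  set R : ℝ → ℝ := fun u => (F u - A * (u ^ (-s) - B * u ^ (-(s + 1)))) / u ^ (-(s + 1))
  obtain ⟨D, hD⟩ := h.bound
  have hR : Tendsto R atTop (nhds 0) := by
    refine squeeze_zero_norm' ?_ ((tendsto_const_nhds (x := D)).div_atTop tendsto_id)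
    filter_upwards [hD, eventually_gt_atTop 0] with u hE hu
    rw [norm_of_nonneg (rpow_nonneg hu.le _)] at hE
    rw [norm_div, norm_of_nonneg (rpow_nonneg hu.le _), div_le_iff₀ (rpow_pos_of_pos hu _)]
    refine hE.trans_eq ?_
    rw [show -(s + 2) = -(s + 1) + -1 by ring, rpow_add hu, rpow_neg_one, id]
    ring
  refine ⟨hR, ?_⟩
  have hlim : Tendsto (fun u => A - A * B * u⁻¹ + u⁻¹ * R u) atTop (nhds A) := by
    simpa using (tendsto_const_nhds.sub (tendsto_const_nhds.mul tendsto_inv_atTop_zero)).add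
      (tendsto_inv_atTop_zero.mul hR)
  refine hlim.congr' ?_
  filter_upwards [eventually_gt_atTop 0] with u hu
  have hs : u ^ (-s) = (u ^ s)⁻¹ := rpow_neg hu.le s
  have hs₁ : u ^ (-(s + 1)) = (u ^ s)⁻¹ * u⁻¹ := by
    rw [neg_add, rpow_add hu, rpow_neg hu.le, rpow_neg_one]
  have : 0 < u ^ s := by positivity
  simp only [R]
  rw [hs, hs₁]
  field_simp
  ring

lemma betaFn_pos {a b : ℝ} (ha : 0 < a) (hb : 0 < b) : 0 < betaFn a b :=
  div_pos (mul_pos (Gamma_pos_of_pos ha) (Gamma_pos_of_pos hb)) (Gamma_pos_of_pos (add_pos ha hb))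

lemma fTail_eq {m k : ℕ} (hm : 0 < m) (hk : 0 < k) (u : ℝ) :
    fTail m k u = ((k : ℝ) / m) ^ ((k : ℝ) / 2) / betaFn ((m : ℝ) / 2) ((k : ℝ) / 2) *
      ∫ x in Ioi u, ((m : ℝ) / k) ^ (((m : ℝ) + k) / 2) * x ^ (((m : ℝ) + k) / 2 - k / 2 - 1) *
        (1 + m / k * x) ^ (-(((m : ℝ) + k) / 2)) := by
  have hc : (0 : ℝ) < m / k := by positivity
  have hpow : ((k : ℝ) / m) ^ ((k : ℝ) / 2) * ((m : ℝ) / k) ^ (((m : ℝ) + k) / 2) =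
      ((m : ℝ) / k) ^ ((m : ℝ) / 2) := by
    rw [← inv_div, inv_rpow hc.le, ← rpow_neg hc.le, ← rpow_add hc]
    ring_nf
  rw [fTail, ← integral_const_mul, betaFn, ← add_div]
  congr 1 with x
  rw [show ((m : ℝ) + k) / 2 - k / 2 - 1 = m / 2 - 1 by ring, ← hpow]
  field_simp

lemma isBigO_fTail_sub_two_term {m k : ℕ} (hm : 0 < m) (hk : 0 < k) :
    (fun u : ℝ => fTail m k u -
        2 * ((k : ℝ) / m) ^ ((k : ℝ) / 2) / (k * betaFn ((m : ℝ) / 2) ((k : ℝ) / 2)) *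
          (u ^ (-((k : ℝ) / 2)) -
            (k : ℝ) ^ 2 * ((k : ℝ) + m) / (2 * m * ((k : ℝ) + 2)) * u ^ (-((k : ℝ) / 2 + 1))))
      =O[atTop] fun u => u ^ (-((k : ℝ) / 2 + 2)) := by
  have hm' : (0 : ℝ) < m := by exact_mod_cast hm
  have hk' : (0 : ℝ) < k := by exact_mod_cast hk
  have hβ := betaFn_pos (by positivity : (0 : ℝ) < m / 2) (by positivity : (0 : ℝ) < k / 2)
  set κ : ℝ := ((k : ℝ) / m) ^ ((k : ℝ) / 2) / betaFn ((m : ℝ) / 2) ((k : ℝ) / 2) with hκ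
  have hκpos : 0 < κ := by positivity
  refine IsBigO.of_bound (κ * ((((m : ℝ) + k) / 2) * (((m : ℝ) + k) / 2 + 1) /
    (2 * ((m : ℝ) / k) ^ 2) / ((k : ℝ) / 2 + 2))) ?_
  filter_upwards [eventually_gt_atTop 0] with u hu
  obtain ⟨hlo, hhi⟩ := integral_Ioi_rpow_mul_one_add_mul_rpow_neg_bounds
    (by positivity : (0 : ℝ) < m / k) (by positivity : (0 : ℝ) ≤ (m + k) / 2)
    (by positivity : (0 : ℝ) < k / 2) hu
  have hmain : 2 * ((k : ℝ) / m) ^ ((k : ℝ) / 2) / (k * betaFn ((m : ℝ) / 2) ((k : ℝ) / 2)) *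
      (u ^ (-((k : ℝ) / 2)) - (k : ℝ) ^ 2 * ((k : ℝ) + m) / (2 * m * ((k : ℝ) + 2)) *
        u ^ (-((k : ℝ) / 2 + 1))) =
      κ * (u ^ (-((k : ℝ) / 2)) / (k / 2) -
        ((m : ℝ) + k) / 2 / (m / k) * (u ^ (-((k : ℝ) / 2 + 1)) / (k / 2 + 1))) := by
    rw [hκ]
    field_simp
    ring
  rw [fTail_eq hm hk, hmain, ← mul_sub, norm_mul, norm_of_nonneg hκpos.le,
    norm_of_nonneg (rpow_nonneg hu.le _), Real.norm_eq_abs, mul_assoc]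
  exact mul_le_mul_of_nonneg_left (abs_sub_le_iff.2 ⟨by linarith, by linarith⟩) hκpos.le

theorem stmt16 (m k : ℕ) (hm : 1 ≤ m) (hk : 2 ≤ k) :
    Tendsto (fun u : ℝ =>
        (fTail m k u -
          2 * ((k : ℝ) / m) ^ ((k : ℝ) / 2) / (k * betaFn ((m : ℝ) / 2) ((k : ℝ) / 2)) *
            (u ^ (-((k : ℝ) / 2)) -
              (k : ℝ) ^ 2 * ((k : ℝ) + m) / (2 * m * ((k : ℝ) + 2)) *
                u ^ (-((k : ℝ) / 2 + 1)))) / u ^ (-((k : ℝ) / 2 + 1)))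
      atTop (nhds 0) ∧
    Tendsto (fun u : ℝ => u ^ ((k : ℝ) / 2) * fTail m k u)
      atTop
      (nhds (2 * ((k : ℝ) / m) ^ ((k : ℝ) / 2) /
        (k * betaFn ((m : ℝ) / 2) ((k : ℝ) / 2)))) := by
  exact tendsto_of_isBigO_sub_two_term (isBigO_fTail_sub_two_term hm (by omega))
end
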